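/- Maximizer of a linear functional over the Bures–Wasserstein ball around the identity: Let G be a nonzero real symmetric positive semidefinite d×d matrix, let ρ > 0, and let γ* > λ_max(G) be the unique solution of Tr[((I − γ⁻¹G)⁻¹ − I)²] = ρ². Set M* := (I − γ*⁻¹G)⁻². Then M* is symmetric positive definite, Tr(M* − 2√M* + I) = ρ², and for every real symmetric M ⪰ 0 with Tr(M − 2√M + I) ≤ ρ² one has Tr(G M) ≤ Tr(G M*). -/

import Mathlib

/-!
Put `P := γ* I − G ≻ 0` and `A := (I − γ*⁻¹ G)⁻¹ ≻ 0`, so that `P A = γ* I`, `M* = A²` and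
`√M* = A`; the boundary identity is then the equation defining `γ*`. For `M ⪰ 0` with
`S := √M`, expanding `Tr((S − A) P (S − A)) ≥ 0` gives the Lagrangian bound
`Tr(GM) ≤ γ* (Tr(M − 2S + I) + Tr A − d)`, with equality at `M = A²`. As `γ* > 0`, the
constraint `Tr(M − 2√M + I) ≤ ρ² = Tr(M* − 2√M* + I)` yields `Tr(GM) ≤ Tr(GM*)`.
-/

open Matrix

noncomputable section

open scoped Classical

/-- The positive semidefinite square root of a positive semidefinite real symmetric
matrix (junk value `0` if the matrix is not positive semidefinite). -/
def psdSqrt {n : Type*} [Fintype n] [DecidableEq n] (A : Matrix n n ℝ) : Matrix n n ℝ :=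
  if h : A.PosSemidef then
    h.1.eigenvectorUnitary.1 * diagonal ((√·) ∘ h.1.eigenvalues) *
      (star h.1.eigenvectorUnitary : Matrix n n ℝ)
  else 0

/-- The largest eigenvalue of a real symmetric matrix `A`, characterized as the least
`c` with `c·I − A ⪰ 0`. -/
def lambdaMax {d : ℕ} (A : Matrix (Fin d) (Fin d) ℝ) : ℝ :=
  sInf {c : ℝ | (c • (1 : Matrix (Fin d) (Fin d) ℝ) - A).PosSemidef}

open scoped MatrixOrder

section PsdSqrt

variable {n : Type*} [Fintype n] [DecidableEq n] {A : Matrix n n ℝ}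

lemma psdSqrt_eq_cfcSqrt (hA : A.PosSemidef) : psdSqrt A = CFC.sqrt A := by
  rw [psdSqrt, dif_pos hA, CFC.sqrt_eq_cfc, cfc_nnreal_eq_real _ A hA.nonneg, hA.1.cfc_eq]
  simp only [IsHermitian.cfc, Unitary.conjStarAlgAut_apply, Real.coe_sqrt, Real.coe_toNNReal']
  congr 3
  ext i
  simp [hA.eigenvalues_nonneg i]

lemma posSemidef_psdSqrt (hA : A.PosSemidef) : (psdSqrt A).PosSemidef := by
  rw [psdSqrt_eq_cfcSqrt hA]
  exact (CFC.sqrt_nonneg A).posSemidef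

lemma psdSqrt_mul_self (hA : A.PosSemidef) : psdSqrt A * psdSqrt A = A := by
  rw [psdSqrt_eq_cfcSqrt hA]
  exact CFC.sqrt_mul_sqrt_self A hA.nonneg

lemma psdSqrt_sq (hA : A.PosSemidef) : psdSqrt (A ^ 2) = A := by
  rw [psdSqrt_eq_cfcSqrt (hA.pow 2)]
  exact CFC.sqrt_sq A hA.nonneg

lemma trace_sub_two_smul_psdSqrt_add_one (M : Matrix n n ℝ) :
    (M - (2 : ℝ) • psdSqrt M + 1).trace = M.trace - 2 * (psdSqrt M).trace + Fintype.card n := by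
  simp only [trace_add, trace_sub, trace_smul, trace_one, smul_eq_mul]

end PsdSqrt

section Spectrum

variable {n : Type*} [Fintype n] [DecidableEq n]

lemma posSemidef_smul_one_sub_of_spectrum_le {G : Matrix n n ℝ} (hG : G.IsHermitian) {c : ℝ}
    (hc : ∀ x ∈ spectrum ℝ G, x ≤ c) : (c • 1 - G).PosSemidef := by
  rw [← Matrix.le_iff, ← Algebra.algebraMap_eq_smul_one]
  exact le_algebraMap_of_spectrum_le hc hG

lemma posDef_smul_one_sub_of_lambdaMax_lt {d : ℕ} {G : Matrix (Fin d) (Fin d) ℝ}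
    (hG : G.IsHermitian) {γ : ℝ} (h : lambdaMax G < γ) : (γ • 1 - G).PosDef := by
  -- the set whose infimum is `lambdaMax G` is nonempty, so it has a member below `γ`
  obtain ⟨c, hc⟩ := G.finite_real_spectrum.bddAbove
  obtain ⟨c', hc', hc'γ⟩ := exists_lt_of_csInf_lt
    ⟨c, posSemidef_smul_one_sub_of_spectrum_le hG fun _ hx => hc hx⟩ h
  have : γ • (1 : Matrix (Fin d) (Fin d) ℝ) - G = (γ - c') • 1 + (c' • 1 - G) := by
    rw [sub_smul]; abel
  rw [this]
  exact (PosDef.one.smul (sub_pos.mpr hc'γ)).add_posSemidef hc'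

lemma pos_of_posDef_smul_one_sub [Nonempty n] {G : Matrix n n ℝ} (hG : G.PosSemidef) {γ : ℝ}
    (h : (γ • 1 - G).PosDef) : 0 < γ := by
  have htr := h.trace_pos
  rw [trace_sub, trace_smul, trace_one, smul_eq_mul] at htr
  have : 0 < γ * Fintype.card n := by linarith [hG.trace_nonneg]
  exact pos_of_mul_pos_left this (Nat.cast_nonneg _)

end Spectrum

section Lagrangian

variable {n : Type*} [Fintype n] [DecidableEq n]

lemma two_mul_trace_le_trace_mul_mul_self_add {P A S : Matrix n n ℝ} {γ : ℝ}
    (hP : P.PosSemidef) (hA : A.IsHermitian) (hS : S.IsHermitian) (hPA : P * A = γ • 1) :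
    2 * γ * S.trace ≤ (P * (S * S)).trace + γ * A.trace := by
  have hAP : A * P = γ • 1 := by
    rw [← hA.eq, ← hP.1.eq, ← conjTranspose_mul, hPA, conjTranspose_smul, conjTranspose_one,
      star_trivial]
  have hnonneg := (hP.conjTranspose_mul_mul_same (S - A)).trace_nonneg
  have hexpand : (S - A)ᴴ * P * (S - A) = S * P * S - γ • S - γ • S + γ • A := by
    rw [(hS.sub hA).eq]
    calc (S - A) * P * (S - A) = S * P * S - S * (P * A) - (A * P) * S + (A * P) * A := by
          noncomm_ring
      _ = _ := by simp only [hPA, hAP, mul_smul_comm, smul_mul_assoc, mul_one, one_mul]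
  have hcycle : (S * P * S).trace = (P * (S * S)).trace := by
    rw [trace_mul_cycle, trace_mul_comm]
  rw [hexpand, trace_add, trace_sub, trace_sub, hcycle] at hnonneg
  simp only [trace_smul, smul_eq_mul] at hnonneg
  linarith

lemma trace_mul_le_of_mul_eq_smul_one {G A M : Matrix n n ℝ} {γ : ℝ}
    (hP : (γ • 1 - G).PosSemidef) (hA : A.IsHermitian) (hPA : (γ • 1 - G) * A = γ • 1)
    (hM : M.PosSemidef) :
    (G * M).trace ≤ γ * ((M - (2 : ℝ) • psdSqrt M + 1).trace + A.trace - Fintype.card n) := by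
  have key := two_mul_trace_le_trace_mul_mul_self_add hP hA (posSemidef_psdSqrt hM).1 hPA
  rw [psdSqrt_mul_self hM, sub_mul, trace_sub, smul_mul_assoc, one_mul, trace_smul,
    smul_eq_mul] at key
  rw [trace_sub_two_smul_psdSqrt_add_one]
  linarith

lemma trace_mul_sq_eq_of_mul_eq_smul_one {G A : Matrix n n ℝ} {γ : ℝ} (hA : A.PosSemidef)
    (hPA : (γ • 1 - G) * A = γ • 1) :
    (G * A ^ 2).trace = γ * ((A ^ 2 - (2 : ℝ) • psdSqrt (A ^ 2) + 1).trace + A.trace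
      - Fintype.card n) := by
  have h : (γ • 1 - G) * A ^ 2 = γ • A := by rw [sq, ← mul_assoc, hPA, smul_mul_assoc, one_mul]
  have htr := congrArg trace h
  rw [sub_mul, trace_sub, smul_mul_assoc, one_mul] at htr
  simp only [trace_smul, smul_eq_mul] at htr
  rw [trace_sub_two_smul_psdSqrt_add_one, psdSqrt_sq hA]
  linarith

end Lagrangian

section Resolvent

variable {n : Type*} [DecidableEq n] {G : Matrix n n ℝ} {γ : ℝ}

lemma smul_one_sub_eq_smul_one_sub_inv_smul (hγ : γ ≠ 0) :
    γ • (1 : Matrix n n ℝ) - G = γ • (1 - γ⁻¹ • G) := by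
  rw [smul_sub, smul_smul, mul_inv_cancel₀ hγ, one_smul]

lemma posDef_one_sub_inv_smul [Fintype n] (hγ : 0 < γ) (hP : (γ • 1 - G).PosDef) :
    (1 - γ⁻¹ • G).PosDef := by
  have := hP.smul (inv_pos.mpr hγ)
  rwa [smul_one_sub_eq_smul_one_sub_inv_smul hγ.ne', smul_smul, inv_mul_cancel₀ hγ.ne',
    one_smul] at this

lemma smul_one_sub_mul_inv_one_sub_inv_smul [Fintype n] (hγ : 0 < γ) (hP : (γ • 1 - G).PosDef) :
    (γ • 1 - G) * (1 - γ⁻¹ • G)⁻¹ = γ • 1 := by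
  rw [smul_one_sub_eq_smul_one_sub_inv_smul hγ.ne', smul_mul_assoc,
    mul_nonsing_inv _ (posDef_one_sub_inv_smul hγ hP).det_pos.ne'.isUnit]

end Resolvent

theorem stmt_14_general {d : ℕ} (G : Matrix (Fin d) (Fin d) ℝ) (hG : G.PosSemidef) (hG0 : G ≠ 0)
    (ρ : ℝ) (γs : ℝ) (hγmem : lambdaMax G < γs)
    (hγeq : ((((1 : Matrix (Fin d) (Fin d) ℝ) - γs⁻¹ • G)⁻¹ - 1) ^ 2).trace = ρ ^ 2)
    (Ms : Matrix (Fin d) (Fin d) ℝ)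
    (hMs : Ms = (((1 : Matrix (Fin d) (Fin d) ℝ) - γs⁻¹ • G)⁻¹) ^ 2) :
    Ms.PosDef ∧
      (Ms - (2 : ℝ) • psdSqrt Ms + 1).trace = ρ ^ 2 ∧
      ∀ M : Matrix (Fin d) (Fin d) ℝ, M.PosSemidef →
        (M - (2 : ℝ) • psdSqrt M + 1).trace ≤ ρ ^ 2 → (G * M).trace ≤ (G * Ms).trace := by
  have : Nonempty (Fin d) := by
    by_contra h
    exact hG0 (Matrix.ext fun i _ => (h ⟨i⟩).elim)
  have hP := posDef_smul_one_sub_of_lambdaMax_lt hG.1 hγmem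
  have hγ := pos_of_posDef_smul_one_sub hG hP
  set A := ((1 : Matrix (Fin d) (Fin d) ℝ) - γs⁻¹ • G)⁻¹
  have hA : A.PosDef := (posDef_one_sub_inv_smul hγ hP).inv
  have hPA := smul_one_sub_mul_inv_one_sub_inv_smul hγ hP
  have hbdry : (Ms - (2 : ℝ) • psdSqrt Ms + 1).trace = ρ ^ 2 := by
    rw [hMs, psdSqrt_sq hA.posSemidef, ← hγeq]
    congr 1
    rw [two_smul]
    noncomm_ring
  refine ⟨?_, hbdry, fun M hM hMρ => ?_⟩
  · rw [hMs]
    exact (hA.posSemidef.pow 2).posDef_iff_isUnit.mpr (hA.isUnit.pow 2)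
  · calc (G * M).trace
        ≤ γs * ((M - (2 : ℝ) • psdSqrt M + 1).trace + A.trace - d) := by
          simpa using trace_mul_le_of_mul_eq_smul_one hP.posSemidef hA.1 hPA hM
      _ ≤ γs * ((Ms - (2 : ℝ) • psdSqrt Ms + 1).trace + A.trace - d) := by gcongr; linarith
      _ = (G * Ms).trace := by
          simpa [hMs] using (trace_mul_sq_eq_of_mul_eq_smul_one hA.posSemidef hPA).symm

/-- Maximizer of a linear functional over the Bures–Wasserstein ball around the
identity: `M* := (I − γ*⁻¹G)⁻²` is positive definite, lies on the boundary
`Tr(M − 2√M + I) = ρ²`, and maximizes `Tr(GM)` over the ball. -/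
theorem stmt_14 {d : ℕ} (G : Matrix (Fin d) (Fin d) ℝ) (hG : G.PosSemidef) (hG0 : G ≠ 0)
    (ρ : ℝ) (hρ : 0 < ρ) (γs : ℝ) (hγmem : lambdaMax G < γs)
    (hγeq : ((((1 : Matrix (Fin d) (Fin d) ℝ) - γs⁻¹ • G)⁻¹ - 1) ^ 2).trace = ρ ^ 2)
    (hγuniq : ∀ γ : ℝ, lambdaMax G < γ →
      ((((1 : Matrix (Fin d) (Fin d) ℝ) - γ⁻¹ • G)⁻¹ - 1) ^ 2).trace = ρ ^ 2 → γ = γs)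
    (Ms : Matrix (Fin d) (Fin d) ℝ)
    (hMs : Ms = (((1 : Matrix (Fin d) (Fin d) ℝ) - γs⁻¹ • G)⁻¹) ^ 2) :
    Ms.PosDef ∧
      (Ms - (2 : ℝ) • psdSqrt Ms + 1).trace = ρ ^ 2 ∧
      ∀ M : Matrix (Fin d) (Fin d) ℝ, M.PosSemidef →
        (M - (2 : ℝ) • psdSqrt M + 1).trace ≤ ρ ^ 2 → (G * M).trace ≤ (G * Ms).trace :=
  stmt_14_general G hG hG0 ρ γs hγmem hγeq Ms hMs
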